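/- arXiv:1512.07522 — 3 statements merged into one kernel-verified Lean document; each statement's English description precedes it below -/
import Mathlib

section
/- Let 𝒟' = (V,E') be a DAG with positive weights c'_{ki} > 0 for (k,i) ∈ E' and c'_{ii} > 0 for i ∈ V. Then the recursive max-linear values x' on 𝒟' with weights c' satisfy x'_i = max_{j∈V} b_{ji} z_j for every z ∈ [0,∞)^d and every i ∈ V if and only if all of the following hold: E^B ⊆ E', the reachability matrix of 𝒟' equals sgn(B), c'_{ii} = b_{ii} for all i ∈ V, c'_{ki} = b_{ki}/b_{kk} for all (k,i) ∈ E^B, and 0 < c'_{ki} ≤ b_{ki}/b_{kk} for all (k,i) ∈ E'∖E^B. -/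
/-!
Feeding unit vectors into the recursion shows that `x_i = max_j b_ji z_j` solves it on `(E', c')`
for every `z` iff `b_ji = max (max_{k ∈ pa'(i)} c'_ki b_jk) ([i = j] c'_ii)` for all `j, i`.
Since `b` is submultiplicative, `b_jk b_ki ≤ b_kk b_ji`, no term on the right exceeds `b_ji`
exactly when `c'_ii ≤ b_ii` and `c'_ki ≤ b_ki / b_kk` on `E'`. The maximum is then attained
because every max-weighted path into `i` can be rerouted to end with an edge of `E^B`.
Conversely, for `(k, i) ∈ E^B` the term realising `b_ki` must come from the parent `k` itself:
another parent `m` would give `b_ki ≤ b_km b_mi / b_mm`, which is at most the maximum over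
parents of `i` below `k` in the definition of `E^B`. Reachability in `𝒟'` matches `sgn B` by
induction along the ancestral order, as a positive `b_ji` is realised through an `E'`-parent of `i`.
-/

open scoped NNReal ENNReal Classical

namespace MaxLinearDAG

variable {d : ℕ}

/-- `p` is a directed path (with at least one edge) from `j` to `i` in the edge relation `E`. -/
def PathFrom (E : Fin d → Fin d → Prop) (j i : Fin d) (p : List (Fin d)) : Prop :=
  2 ≤ p.length ∧ p.head? = some j ∧ p.getLast? = some i ∧ List.Chain' E p

/-- The directed graph given by `E` is acyclic: no directed path from a node to itself. -/
def Acyclic (E : Fin d → Fin d → Prop) : Prop :=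
  ∀ i, ¬ ∃ p, PathFrom E i i p

/-- `j` is an ancestor of `i`: there is a path from `j` to `i`. -/
def anc (E : Fin d → Fin d → Prop) (j i : Fin d) : Prop :=
  ∃ p, PathFrom E j i p

/-- The weight of a path `p` starting at `j`: `c j j` times the product of the
edge weights along `p`. -/
noncomputable def pathWeight (c : Fin d → Fin d → ℝ≥0) (j : Fin d) (p : List (Fin d)) : ℝ≥0 :=
  c j j * ((p.zip p.tail).map fun q => c q.1 q.2).prod

/-- `b` is the max-linear coefficient matrix of the recursive ML model on `(E, c)`:
for `j ∈ an(i)`, `b j i` is the (attained) maximum of the path weights over all paths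
from `j` to `i`; `b i i = c i i`; and `b j i = 0` for `j ∉ An(i)`. -/
def IsMLMatrix (E : Fin d → Fin d → Prop) (c b : Fin d → Fin d → ℝ≥0) : Prop :=
  (∀ i, b i i = c i i) ∧
  (∀ j i, j ≠ i → ¬ anc E j i → b j i = 0) ∧
  (∀ j i p, PathFrom E j i p → pathWeight c j p ≤ b j i) ∧
  (∀ j i, anc E j i → ∃ p, PathFrom E j i p ∧ pathWeight c j p = b j i)

/-- `x` is the vector of recursive max-linear values on `(E, c)` for noise `z`:
`x i = max (max_{k ∈ pa(i)} c k i * x k) (c i i * z i)`, empty max being `0`. -/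
def IsRecML (E : Fin d → Fin d → Prop) (c : Fin d → Fin d → ℝ≥0) (z x : Fin d → ℝ≥0) : Prop :=
  ∀ i, x i = (Finset.univ.sup fun k => if E k i then c k i * x k else 0) ⊔ c i i * z i

/-- Max-times matrix product `F ⊙ G`. -/
noncomputable def mprod (F G : Fin d → Fin d → ℝ≥0) : Fin d → Fin d → ℝ≥0 :=
  fun i j => Finset.univ.sup fun k => F i k * G k j

/-- Max-times matrix power, `mpow A 0` being the identity matrix. -/
noncomputable def mpow (A : Fin d → Fin d → ℝ≥0) : ℕ → Fin d → Fin d → ℝ≥0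
  | 0 => fun i j => if i = j then 1 else 0
  | n + 1 => mprod (mpow A n) A

/-- `p` is a max-weighted path from `j` to `i`. -/
def MaxWeighted (E : Fin d → Fin d → Prop) (c b : Fin d → Fin d → ℝ≥0)
    (j i : Fin d) (p : List (Fin d)) : Prop :=
  PathFrom E j i p ∧ pathWeight c j p = b j i

/-- The lowest max-weighted ancestors of `i` in `U`: nodes `j ∈ An(i) ∩ U` such that no
max-weighted path from `j` to `i` passes through a node of `U \ {j}`. -/
def AnLow (E : Fin d → Fin d → Prop) (c b : Fin d → Fin d → ℝ≥0)
    (U : Set (Fin d)) (i : Fin d) : Set (Fin d) :=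
  {j | (anc E j i ∨ j = i) ∧ j ∈ U ∧
    ∀ p, MaxWeighted E c b j i p → ¬ ∃ u ∈ U \ {j}, u ∈ p}

/-- The highest max-weighted descendants of `i` in `U`: nodes `l ∈ De(i) ∩ U` such that no
max-weighted path from `i` to `l` passes through a node of `U \ {l}`. -/
def DeHigh (E : Fin d → Fin d → Prop) (c b : Fin d → Fin d → ℝ≥0)
    (U : Set (Fin d)) (i : Fin d) : Set (Fin d) :=
  {l | (anc E i l ∨ l = i) ∧ l ∈ U ∧
    ∀ p, MaxWeighted E c b i l p → ¬ ∃ u ∈ U \ {l}, u ∈ p}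

section Paths

variable {E : Fin d → Fin d → Prop} {c : Fin d → Fin d → ℝ≥0} {i j k : Fin d}
  {p : List (Fin d)}

noncomputable def edgeProd (c : Fin d → Fin d → ℝ≥0) (p : List (Fin d)) : ℝ≥0 :=
  ((p.zip p.tail).map fun q => c q.1 q.2).prod

lemma pathWeight_eq_mul_edgeProd : pathWeight c j p = c j j * edgeProd c p := rfl

@[simp] lemma edgeProd_nil : edgeProd c [] = 1 := rfl

@[simp] lemma edgeProd_singleton (a : Fin d) : edgeProd c [a] = 1 := rfl

@[simp] lemma edgeProd_cons_cons (a b : Fin d) (t : List (Fin d)) :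
    edgeProd c (a :: b :: t) = c a b * edgeProd c (b :: t) := rfl

lemma edgeProd_append_cons (a : Fin d) (l : List (Fin d)) :
    ∀ p : List (Fin d), edgeProd c (p ++ a :: l) = edgeProd c (p ++ [a]) * edgeProd c (a :: l)
  | [] => by simp
  | [x] => by simp
  | x :: y :: p => by
      simp only [List.cons_append, edgeProd_cons_cons] at *
      rw [← List.cons_append, edgeProd_append_cons a l (y :: p), List.cons_append, mul_assoc]

lemma edgeProd_pos :
    ∀ {p : List (Fin d)}, List.IsChain (fun a b => 0 < c a b) p → 0 < edgeProd c p
  | [], _ | [_], _ => by simp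
  | _ :: _ :: _, h => by
      rw [List.isChain_cons_cons] at h
      exact mul_pos h.1 (edgeProd_pos h.2)

lemma PathFrom.pathWeight_pos (hcd : ∀ i, 0 < c i i) (hce : ∀ k i, E k i → 0 < c k i)
    (hp : PathFrom E j i p) : 0 < pathWeight c j p :=
  mul_pos (hcd j) (edgeProd_pos (hp.2.2.2.imp fun _ _ => hce _ _))

lemma PathFrom.exists_eq_cons (hp : PathFrom E j i p) : ∃ t, p = j :: t ∧ t ≠ [] := by
  obtain ⟨hl, hh, -, -⟩ := hp
  match p, hl, hh with
  | a :: b :: t, _, hh => exact ⟨b :: t, by simpa using hh, List.cons_ne_nil _ _⟩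

lemma PathFrom.eq_dropLast_append (hp : PathFrom E j i p) : p = p.dropLast ++ [i] := by
  obtain ⟨t, rfl, -⟩ := hp.exists_eq_cons
  have hlast := hp.2.2.1
  rw [List.getLast?_eq_some_getLast (List.cons_ne_nil _ _), Option.some.injEq] at hlast
  conv_lhs => rw [← List.dropLast_append_getLast (List.cons_ne_nil j t), hlast]

lemma PathFrom.edge (h : E k i) : PathFrom E k i [k, i] :=
  ⟨le_rfl, rfl, rfl, List.isChain_pair.mpr h⟩

lemma pathWeight_pair : pathWeight c k [k, i] = c k k * c k i := by
  simp [pathWeight_eq_mul_edgeProd]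

lemma PathFrom.append {q : List (Fin d)} (hp : PathFrom E j k p) (hq : PathFrom E k i q) :
    PathFrom E j i (p ++ q.tail) := by
  obtain ⟨t, rfl, ht⟩ := hq.exists_eq_cons
  obtain ⟨-, -, hlast, hchain⟩ := hq
  rw [List.Chain', List.isChain_cons] at hchain
  refine ⟨?_, ?_, ?_, ?_⟩
  · have := hp.1
    rw [List.length_append]
    omega
  · obtain ⟨s, rfl, -⟩ := hp.exists_eq_cons; rfl
  · rwa [List.tail_cons, List.getLast?_append_of_ne_nil _ ht,
      ← List.getLast?_append_of_ne_nil [k] ht]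
  · rw [List.tail_cons, List.Chain', List.isChain_append]
    refine ⟨hp.2.2.2, hchain.2, ?_⟩
    rw [hp.2.2.1]
    simpa using hchain.1

lemma PathFrom.pathWeight_append {q : List (Fin d)} (hp : PathFrom E j k p)
    (hq : PathFrom E k i q) :
    pathWeight c j (p ++ q.tail) * c k k = pathWeight c j p * pathWeight c k q := by
  obtain ⟨t, rfl, -⟩ := hq.exists_eq_cons
  rw [hp.eq_dropLast_append, List.tail_cons, List.append_assoc, List.singleton_append,
    pathWeight_eq_mul_edgeProd, pathWeight_eq_mul_edgeProd, pathWeight_eq_mul_edgeProd,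
    edgeProd_append_cons]
  ring

lemma pathWeight_concat {q : List (Fin d)} (hk : q.getLast? = some k) :
    pathWeight c j (q ++ [i]) = pathWeight c j q * c k i := by
  have hq : q ≠ [] := by rintro rfl; simp at hk
  have hqk : q = q.dropLast ++ [k] := by
    rw [List.getLast?_eq_some_getLast hq, Option.some.injEq] at hk
    rw [← hk, List.dropLast_append_getLast]
  rw [pathWeight_eq_mul_edgeProd, pathWeight_eq_mul_edgeProd, hqk, List.append_assoc,
    List.singleton_append, edgeProd_append_cons, ← hqk]
  simp [mul_assoc]

lemma PathFrom.exists_last_edge (hp : PathFrom E j i p) :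
    ∃ q k, p = q ++ [i] ∧ q.getLast? = some k ∧ E k i ∧
      (q = [j] ∧ k = j ∨ PathFrom E j k q) := by
  obtain ⟨t, rfl, ht⟩ := hp.exists_eq_cons
  set q := (j :: t).dropLast with hq_def
  have hq : q ≠ [] := by
    obtain ⟨a, t, rfl⟩ := List.exists_cons_of_ne_nil ht
    simp [hq_def]
  set k := q.getLast hq
  have hpq : j :: t = q ++ [i] := hp.eq_dropLast_append
  have hchain := hp.2.2.2
  rw [hpq, List.Chain', List.isChain_append, List.getLast?_eq_some_getLast hq] at hchain
  refine ⟨q, k, hpq, List.getLast?_eq_some_getLast hq, by simpa using hchain.2.2, ?_⟩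
  have hqj : q = j :: t.dropLast := List.dropLast_cons_of_ne_nil ht
  rcases eq_or_ne t.dropLast [] with h | h
  · have hq1 : q = [j] := by rw [hqj, h]
    exact Or.inl ⟨hq1, by simp [k, hq1]⟩
  · refine Or.inr ⟨?_, by rw [hqj]; rfl, List.getLast?_eq_some_getLast hq, hchain.1⟩
    obtain ⟨a, s, hs⟩ := List.exists_cons_of_ne_nil h
    simp [hqj, hs]

end Paths

section Ancestors

variable {E E' : Fin d → Fin d → Prop} {i j k : Fin d}

lemma anc_single (h : E k i) : anc E k i := ⟨_, PathFrom.edge h⟩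

lemma anc_trans (hjk : anc E j k) (hki : anc E k i) : anc E j i :=
  let ⟨_, hp⟩ := hjk
  let ⟨_, hq⟩ := hki
  ⟨_, hp.append hq⟩

lemma Acyclic.ne_of_anc (hE : Acyclic E) (h : anc E j i) : j ≠ i := by
  rintro rfl
  exact hE j h

lemma Acyclic.not_edge_self (hE : Acyclic E) (i : Fin d) : ¬ E i i :=
  fun h => hE i (anc_single h)

lemma anc_mono (hE : ∀ a b, E a b → anc E' a b) (h : anc E j i) : anc E' j i := by
  obtain ⟨p, hp⟩ := h
  induction hl : p.length using Nat.strong_induction_on generalizing p i with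
  | _ n ih =>
    obtain ⟨q, k, rfl, -, hki, hq⟩ := hp.exists_last_edge
    rcases hq with ⟨-, rfl⟩ | hq
    · exact hE _ _ hki
    · exact anc_trans (ih q.length (by simp [← hl]) q hq rfl) (hE _ _ hki)

lemma Acyclic.wellFounded_anc (hE : Acyclic E) : WellFounded (anc E) :=
  haveI : IsTrans (Fin d) (anc E) := ⟨fun _ _ _ => anc_trans⟩
  haveI : Std.Irrefl (anc E) := ⟨hE⟩
  Finite.wellFounded_of_trans_of_irrefl _

lemma Acyclic.wellFounded_flip_anc (hE : Acyclic E) : WellFounded (flip (anc E)) :=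
  haveI : IsTrans (Fin d) (flip (anc E)) := ⟨fun _ _ _ h1 h2 => anc_trans h2 h1⟩
  haveI : Std.Irrefl (flip (anc E)) := ⟨hE⟩
  Finite.wellFounded_of_trans_of_irrefl _

end Ancestors

namespace IsMLMatrix

variable {E : Fin d → Fin d → Prop} {c b : Fin d → Fin d → ℝ≥0} {i j k : Fin d}

lemma diag_pos (hb : IsMLMatrix E c b) (hcd : ∀ i, 0 < c i i) (i : Fin d) : 0 < b i i :=
  hb.1 i ▸ hcd i

lemma pos_of_anc (hb : IsMLMatrix E c b) (hcd : ∀ i, 0 < c i i)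
    (hce : ∀ k i, E k i → 0 < c k i) (h : anc E j i) : 0 < b j i := by
  obtain ⟨p, hp, hw⟩ := hb.2.2.2 j i h
  exact hw ▸ hp.pathWeight_pos hcd hce

lemma anc_or_eq_of_pos (hb : IsMLMatrix E c b) (h : 0 < b j i) : anc E j i ∨ j = i := by
  by_contra! hji
  exact h.ne' (hb.2.1 j i hji.2 hji.1)

lemma mul_edge_le (hb : IsMLMatrix E c b) (h : E k i) : b k k * c k i ≤ b k i := by
  have := hb.2.2.1 k i _ (PathFrom.edge h)
  rwa [pathWeight_pair, ← hb.1 k] at this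

/-- `b k k = c k k` compensates for the weight of `k`, which both factors count. -/
lemma mul_le (hb : IsMLMatrix E c b) (j k i : Fin d) : b j k * b k i ≤ b k k * b j i := by
  rcases eq_or_ne j k with rfl | hjk
  · exact le_rfl
  rcases eq_or_ne k i with rfl | hki
  · exact (mul_comm _ _).le
  by_cases hanc : anc E j k ∧ anc E k i
  · obtain ⟨p, hp, hwp⟩ := hb.2.2.2 j k hanc.1
    obtain ⟨q, hq, hwq⟩ := hb.2.2.2 k i hanc.2
    calc b j k * b k i = pathWeight c j (p ++ q.tail) * c k k := by
          rw [hp.pathWeight_append hq, hwp, hwq]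
      _ ≤ b j i * b k k := by rw [hb.1 k]; gcongr; exact hb.2.2.1 j i _ (hp.append hq)
      _ = b k k * b j i := mul_comm _ _
  · rw [not_and_or] at hanc
    rcases hanc with h | h
    · simp [hb.2.1 j k hjk h]
    · simp [hb.2.1 k i hki h]

lemma exists_last_edge (hb : IsMLMatrix E c b) (h : anc E j i) :
    ∃ k, E k i ∧ (j = k ∨ anc E j k) ∧ b j k * b k i = b k k * b j i := by
  obtain ⟨p, hp, hw⟩ := hb.2.2.2 j i h
  obtain ⟨q, k, rfl, hk, hki, hq⟩ := hp.exists_last_edge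
  rcases hq with ⟨-, rfl⟩ | hq
  · exact ⟨_, hki, Or.inl rfl, rfl⟩
  refine ⟨k, hki, Or.inr ⟨q, hq⟩, le_antisymm (hb.mul_le j k i) ?_⟩
  calc b k k * b j i = pathWeight c j q * (b k k * c k i) := by
        rw [← hw, pathWeight_concat hk]; ring
    _ ≤ b j k * b k i := mul_le_mul' (hb.2.2.1 j k q hq) (hb.mul_edge_le hki)

end IsMLMatrix

section MinimumDAG

variable {E : Fin d → Fin d → Prop} {c b : Fin d → Fin d → ℝ≥0} {i j k m : Fin d}

noncomputable def maxViaParent (E : Fin d → Fin d → Prop) (b : Fin d → Fin d → ℝ≥0)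
    (k i : Fin d) : ℝ≥0 :=
  Finset.univ.sup fun l => if anc E k l ∧ E l i then b k l * b l i / b l l else 0

/-- The edges `E^B` of the minimum max-linear DAG `𝒟^B`. -/
def IsMinMLEdge (E : Fin d → Fin d → Prop) (b : Fin d → Fin d → ℝ≥0) (k i : Fin d) :
    Prop :=
  E k i ∧ maxViaParent E b k i < b k i

lemma IsMLMatrix.div_le_maxViaParent (hb : IsMLMatrix E c b) (hcd : ∀ i, 0 < c i i)
    (hkm : anc E k m) (hmi : anc E m i) : b k m * b m i / b m m ≤ maxViaParent E b k i := by
  obtain ⟨l, hli, hml, heq⟩ := hb.exists_last_edge hmi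
  have hkl : anc E k l := by
    rcases hml with rfl | hml
    exacts [hkm, anc_trans hkm hml]
  calc b k m * b m i / b m m ≤ b k l * b l i / b l l := by
        rw [div_le_div_iff₀ (hb.diag_pos hcd m) (hb.diag_pos hcd l)]
        calc b k m * b m i * b l l = b k m * (b m l * b l i) := by rw [heq]; ring
          _ ≤ b m m * b k l * b l i := by
              rw [← mul_assoc]; gcongr ?_ * _; exact hb.mul_le k m l
          _ = b k l * b l i * b m m := by ring
    _ ≤ maxViaParent E b k i := by
        refine le_trans (le_of_eq ?_) (Finset.le_sup (Finset.mem_univ l))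
        rw [if_pos ⟨hkl, hli⟩]

/-- Take `k` with no other candidate among its descendants: if `(k, i)` were not in `E^B`, the
parent `l` of `i` attaining `maxViaParent E b k i` would be such a candidate. -/
lemma IsMLMatrix.exists_isMinMLEdge (hE : Acyclic E) (hb : IsMLMatrix E c b)
    (hcd : ∀ i, 0 < c i i) (hce : ∀ k i, E k i → 0 < c k i) (h : anc E j i) :
    ∃ k, IsMinMLEdge E b k i ∧ (j = k ∨ anc E j k) ∧ b j k * b k i = b k k * b j i := by
  obtain ⟨k, hk, hmax⟩ := hE.wellFounded_flip_anc.has_min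
    {k | E k i ∧ (j = k ∨ anc E j k) ∧ b j k * b k i = b k k * b j i}
    (hb.exists_last_edge h)
  obtain ⟨hki, hjk, heq⟩ := hk
  refine ⟨k, ⟨hki, not_le.1 fun hle => ?_⟩, hjk, heq⟩
  have hpos : 0 < b k i := hb.pos_of_anc hcd hce (anc_single hki)
  obtain ⟨l, -, hle⟩ := (Finset.le_sup_iff hpos).1 hle
  by_cases hl : anc E k l ∧ E l i
  swap
  · rw [if_neg hl] at hle
    exact hpos.not_ge hle
  rw [if_pos hl, le_div_iff₀ (hb.diag_pos hcd l)] at hle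
  refine hmax l ⟨hl.2, Or.inr ?_, le_antisymm (hb.mul_le j l i) ?_⟩ hl.1
  · rcases hjk with rfl | hjk
    exacts [hl.1, anc_trans hjk hl.1]
  · refine le_of_mul_le_mul_left ?_ (hb.diag_pos hcd k)
    calc b k k * (b l l * b j i) = b j k * b k i * b l l := by rw [heq]; ring
      _ ≤ b j k * (b k l * b l i) := by rw [mul_assoc]; gcongr
      _ ≤ b k k * (b j l * b l i) := by
          rw [← mul_assoc, ← mul_assoc]; gcongr ?_ * _; exact hb.mul_le j k l

end MinimumDAG

section Recursion

variable {E : Fin d → Fin d → Prop} {c b : Fin d → Fin d → ℝ≥0} {i j k : Fin d}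

def IsRecMLMatrix (E : Fin d → Fin d → Prop) (c b : Fin d → Fin d → ℝ≥0) : Prop :=
  ∀ j i, b j i = (Finset.univ.sup fun k => if E k i then c k i * b j k else 0) ⊔
    (if i = j then c i i else 0)

lemma forall_isRecML_iff (b : Fin d → Fin d → ℝ≥0) :
    (∀ z, IsRecML E c z fun i => Finset.univ.sup fun j => b j i * z j) ↔
      IsRecMLMatrix E c b := by
  refine ⟨fun h j i => ?_, fun h z i => ?_⟩
  · simpa [Finset.sup_ite, Finset.filter_eq', Finset.filter_eq, eq_comm]
      using h (fun m => if m = j then 1 else 0) i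
  · calc (Finset.univ.sup fun j => b j i * z j)
        = Finset.univ.sup fun j =>
            (Finset.univ.sup fun k => if E k i then c k i * (b j k * z j) else 0) ⊔
              (if i = j then c i i * z j else 0) := by
          refine Finset.sup_congr rfl fun j _ => ?_
          rw [h j i, NNReal.sup_mul, NNReal.finset_sup_mul]
          simp only [ite_mul, zero_mul, mul_assoc]
      _ = _ := by
          erw [Finset.sup_sup]
          rw [Finset.sup_comm]
          congr 1
          · refine Finset.sup_congr rfl fun k _ => ?_
            split_ifs <;> simp [NNReal.mul_finset_sup]
          · simp [Finset.sup_ite, Finset.filter_eq]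

namespace IsRecMLMatrix

lemma mul_le (h : IsRecMLMatrix E c b) (hki : E k i) (j : Fin d) : c k i * b j k ≤ b j i := by
  rw [h j i]
  refine le_sup_of_le_left (le_trans ?_ (Finset.le_sup (Finset.mem_univ k)))
  rw [if_pos hki]

lemma diag_le (h : IsRecMLMatrix E c b) (i : Fin d) : c i i ≤ b i i := by
  rw [h i i]
  exact le_sup_of_le_right (if_pos rfl).ge

lemma exists_of_pos (h : IsRecMLMatrix E c b) (hpos : 0 < b j i) :
    (j = i ∧ b j i ≤ c i i) ∨ ∃ k, E k i ∧ b j i ≤ c k i * b j k := by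
  have hle := (h j i).le
  rcases le_sup_iff.1 hle with hle | hle
  · obtain ⟨k, -, hk⟩ := (Finset.le_sup_iff hpos).1 hle
    by_cases hki : E k i
    · exact Or.inr ⟨k, hki, by rwa [if_pos hki] at hk⟩
    · rw [if_neg hki] at hk
      exact absurd hk hpos.not_ge
  · by_cases hij : i = j
    · subst hij
      exact Or.inl ⟨rfl, by rwa [if_pos rfl] at hle⟩
    · rw [if_neg hij] at hle
      exact absurd hle hpos.not_ge

end IsRecMLMatrix

end Recursion

section Comparison

variable {E E' : Fin d → Fin d → Prop} {c c' b : Fin d → Fin d → ℝ≥0} {i j k : Fin d}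

namespace IsRecMLMatrix

lemma anc_of_edge (h : IsRecMLMatrix E' c' b) (hb : IsMLMatrix E c b) (hcd : ∀ i, 0 < c i i)
    (hE' : Acyclic E') (hc'e : ∀ k i, E' k i → 0 < c' k i) (hki : E' k i) : anc E k i := by
  have hpos : 0 < b k i := (mul_pos (hc'e k i hki) (hb.diag_pos hcd k)).trans_le (h.mul_le hki k)
  rcases hb.anc_or_eq_of_pos hpos with hanc | rfl
  exacts [hanc, absurd hki (hE'.not_edge_self k)]

lemma anc_of_pos (h : IsRecMLMatrix E' c' b) (hE : Acyclic E) (hb : IsMLMatrix E c b)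
    (hcd : ∀ i, 0 < c i i) (hE' : Acyclic E') (hc'e : ∀ k i, E' k i → 0 < c' k i)
    (hji : j ≠ i) (hpos : 0 < b j i) : anc E' j i := by
  induction i using hE.wellFounded_anc.induction with
  | _ i ih =>
    rcases h.exists_of_pos hpos with ⟨hji', -⟩ | ⟨k, hki, hle⟩
    · exact absurd hji' hji
    have hjk : 0 < b j k := pos_of_mul_pos_right (hpos.trans_le hle) zero_le
    rcases eq_or_ne j k with rfl | hjk'
    · exact anc_single hki
    · exact anc_trans (ih k (h.anc_of_edge hb hcd hE' hc'e hki) hjk' hjk) (anc_single hki)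

lemma anc_or_eq_iff_pos (h : IsRecMLMatrix E' c' b) (hE : Acyclic E) (hb : IsMLMatrix E c b)
    (hcd : ∀ i, 0 < c i i) (hce : ∀ k i, E k i → 0 < c k i) (hE' : Acyclic E')
    (hc'e : ∀ k i, E' k i → 0 < c' k i) : anc E' j i ∨ j = i ↔ 0 < b j i := by
  refine ⟨?_, fun hpos => ?_⟩
  · rintro (hji | rfl)
    · exact hb.pos_of_anc hcd hce (anc_mono (fun _ _ => h.anc_of_edge hb hcd hE' hc'e) hji)
    · exact hb.diag_pos hcd j
  · rcases eq_or_ne j i with rfl | hji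
    · exact Or.inr rfl
    · exact Or.inl (h.anc_of_pos hE hb hcd hE' hc'e hji hpos)

lemma diag_eq (h : IsRecMLMatrix E' c' b) (hE : Acyclic E) (hb : IsMLMatrix E c b)
    (hcd : ∀ i, 0 < c i i) (hE' : Acyclic E') (hc'e : ∀ k i, E' k i → 0 < c' k i)
    (i : Fin d) : c' i i = b i i := by
  refine le_antisymm (h.diag_le i) ?_
  rcases h.exists_of_pos (hb.diag_pos hcd i) with ⟨-, hle⟩ | ⟨k, hki, hle⟩
  · exact hle
  have hki' : anc E k i := h.anc_of_edge hb hcd hE' hc'e hki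
  have hik : b i k = 0 :=
    hb.2.1 i k (hE.ne_of_anc hki').symm fun hik => hE i (anc_trans hik hki')
  rw [hik, mul_zero] at hle
  exact absurd hle (hb.diag_pos hcd i).not_ge

lemma le_div (h : IsRecMLMatrix E' c' b) (hb : IsMLMatrix E c b) (hcd : ∀ i, 0 < c i i)
    (hki : E' k i) : c' k i ≤ b k i / b k k :=
  (le_div_iff₀ (hb.diag_pos hcd k)).2 (h.mul_le hki k)

lemma edge_of_isMinMLEdge (h : IsRecMLMatrix E' c' b) (hE : Acyclic E) (hb : IsMLMatrix E c b)
    (hcd : ∀ i, 0 < c i i) (hce : ∀ k i, E k i → 0 < c k i) (hE' : Acyclic E')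
    (hc'e : ∀ k i, E' k i → 0 < c' k i) (hki : IsMinMLEdge E b k i) :
    E' k i ∧ c' k i = b k i / b k k := by
  have hpos : 0 < b k i := hb.pos_of_anc hcd hce (anc_single hki.1)
  rcases h.exists_of_pos hpos with ⟨rfl, -⟩ | ⟨m, hmi, hle⟩
  · exact absurd hki.1 (hE.not_edge_self k)
  rcases eq_or_ne m k with rfl | hmk
  · exact ⟨hmi, le_antisymm (h.le_div hb hcd hmi) ((div_le_iff₀ (hb.diag_pos hcd m)).2 hle)⟩
  have hkm : anc E k m := by
    have : 0 < b k m := pos_of_mul_pos_right (hpos.trans_le hle) zero_le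
    exact (hb.anc_or_eq_of_pos this).resolve_right hmk.symm
  refine absurd ?_ hki.2.not_ge
  calc b k i ≤ c' m i * b k m := hle
    _ ≤ b m i / b m m * b k m := by gcongr; exact h.le_div hb hcd hmi
    _ = b k m * b m i / b m m := by rw [div_mul_eq_mul_div, mul_comm]
    _ ≤ maxViaParent E b k i :=
        hb.div_le_maxViaParent hcd hkm (h.anc_of_edge hb hcd hE' hc'e hmi)

end IsRecMLMatrix

lemma isRecMLMatrix_of_isMinMLEdge (hE : Acyclic E) (hb : IsMLMatrix E c b)
    (hcd : ∀ i, 0 < c i i) (hce : ∀ k i, E k i → 0 < c k i)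
    (hmin : ∀ k i, IsMinMLEdge E b k i → E' k i ∧ c' k i = b k i / b k k)
    (hdiag : ∀ i, c' i i = b i i) (hle : ∀ k i, E' k i → c' k i ≤ b k i / b k k) :
    IsRecMLMatrix E' c' b := by
  intro j i
  refine le_antisymm ?_ (sup_le (Finset.sup_le fun k _ => ?_) ?_)
  · rcases eq_or_ne j i with rfl | hji
    · exact le_sup_of_le_right (by rw [if_pos rfl, hdiag])
    rcases eq_zero_or_pos (b j i) with h0 | hpos
    · rw [h0]
      exact zero_le
    obtain ⟨k, hk, -, heq⟩ :=
      hb.exists_isMinMLEdge hE hcd hce ((hb.anc_or_eq_of_pos hpos).resolve_right hji)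
    obtain ⟨hki, hck⟩ := hmin k i hk
    refine le_sup_of_le_left (le_trans (le_of_eq ?_) (Finset.le_sup (Finset.mem_univ k)))
    rw [if_pos hki, hck, div_mul_eq_mul_div, mul_comm (b k i), heq,
      mul_div_cancel_left₀ _ (hb.diag_pos hcd k).ne']
  · split_ifs with hki
    · calc c' k i * b j k ≤ b k i / b k k * b j k := by gcongr; exact hle k i hki
        _ ≤ b j i := by
            rw [div_mul_eq_mul_div, div_le_iff₀ (hb.diag_pos hcd k), mul_comm (b k i),
              mul_comm _ (b k k)]
            exact hb.mul_le j k i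
    · exact zero_le
  · split_ifs with hij
    · rw [hij, hdiag]
    · exact zero_le

end Comparison

theorem stmt12_general {d : ℕ} (E : Fin d → Fin d → Prop) (hE : Acyclic E)
    (c : Fin d → Fin d → ℝ≥0) (hcd : ∀ i, 0 < c i i) (hce : ∀ k i, E k i → 0 < c k i)
    (b : Fin d → Fin d → ℝ≥0) (hb : IsMLMatrix E c b)
    (E' : Fin d → Fin d → Prop) (hE' : Acyclic E')
    (c' : Fin d → Fin d → ℝ≥0) (hc'e : ∀ k i, E' k i → 0 < c' k i) :
    let edgeB : Fin d → Fin d → Prop := fun k i => E k i ∧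
      (Finset.univ.sup fun l =>
        if anc E k l ∧ E l i then b k l * b l i / b l l else 0) < b k i
    (∀ z : Fin d → ℝ≥0,
        IsRecML E' c' z fun i => Finset.univ.sup fun j => b j i * z j) ↔
      ((∀ k i, edgeB k i → E' k i) ∧
       (∀ j i, (anc E' j i ∨ j = i) ↔ 0 < b j i) ∧
       (∀ i, c' i i = b i i) ∧
       (∀ k i, edgeB k i → c' k i = b k i / b k k) ∧
       (∀ k i, E' k i → ¬ edgeB k i → c' k i ≤ b k i / b k k)) := by
  intro edgeB
  rw [forall_isRecML_iff]
  constructor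
  · intro h
    have hmin k i (hki : edgeB k i) := h.edge_of_isMinMLEdge hE hb hcd hce hE' hc'e hki
    exact ⟨fun k i hki => (hmin k i hki).1,
      fun j i => h.anc_or_eq_iff_pos hE hb hcd hce hE' hc'e,
      h.diag_eq hE hb hcd hE' hc'e,
      fun k i hki => (hmin k i hki).2,
      fun k i hki _ => h.le_div hb hcd hki⟩
  · rintro ⟨hE'B, -, hdiag, hminB, hle⟩
    refine isRecMLMatrix_of_isMinMLEdge hE hb hcd hce
      (fun k i hki => ⟨hE'B k i hki, hminB k i hki⟩) hdiag fun k i hki => ?_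
    by_cases hB : edgeB k i
    · exact (hminB k i hB).le
    · exact hle k i hki hB

/-- Let `𝒟' = (V, E')` be a DAG with positive weights `c'`. The recursive
max-linear values on `𝒟'` with weights `c'` equal `max_j b j i * z j` for every `z` iff all
of the following hold: `E^B ⊆ E'`, the reachability matrix of `𝒟'` equals `sgn(B)`,
`c' i i = b i i` for all `i`, `c' k i = b k i / b k k` for `(k,i) ∈ E^B`, and
`c' k i ≤ b k i / b k k` for `(k,i) ∈ E' ∖ E^B`. -/
theorem stmt12 {d : ℕ} (hd : 1 ≤ d) (E : Fin d → Fin d → Prop) (hE : Acyclic E)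
    (c : Fin d → Fin d → ℝ≥0) (hcd : ∀ i, 0 < c i i) (hce : ∀ k i, E k i → 0 < c k i)
    (b : Fin d → Fin d → ℝ≥0) (hb : IsMLMatrix E c b)
    (E' : Fin d → Fin d → Prop) (hE' : Acyclic E')
    (c' : Fin d → Fin d → ℝ≥0) (hc'e : ∀ k i, E' k i → 0 < c' k i)
    (hc'd : ∀ i, 0 < c' i i) :
    let edgeB : Fin d → Fin d → Prop := fun k i => E k i ∧
      (Finset.univ.sup fun l =>
        if anc E k l ∧ E l i then b k l * b l i / b l l else 0) < b k i
    (∀ z : Fin d → ℝ≥0,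
        IsRecML E' c' z fun i => Finset.univ.sup fun j => b j i * z j) ↔
      ((∀ k i, edgeB k i → E' k i) ∧
       (∀ j i, (anc E' j i ∨ j = i) ↔ 0 < b j i) ∧
       (∀ i, c' i i = b i i) ∧
       (∀ k i, edgeB k i → c' k i = b k i / b k k) ∧
       (∀ k i, E' k i → ¬ edgeB k i → c' k i ≤ b k i / b k k)) :=
  stmt12_general E hE c hcd hce b hb E' hE' c' hc'e
end MaxLinearDAG
end

section
/- Let B = (b_{ij})_{d×d} be a nonnegative matrix such that sgn(B) is the reachability matrix of some DAG on V = {1,…,d} (in particular b_{ii} > 0 for all i, and the relation j ≺ i defined by j ≠ i and b_{ji} > 0 is transitive and irreflexive). Set B_0 = (b_{ij}/b_{ii})_{d×d}. Then there exist a DAG 𝒟' = (V,E') and positive weights c'_{ki} > 0 ((k,i) ∈ E') and c'_{ii} > 0 (i ∈ V) such that the recursive max-linear values x' on 𝒟' satisfy x'_i = max_{j∈V} b_{ji} z_j for every z ∈ [0,∞)^d and every i ∈ V, if and only if B = B ⊙ B_0; equivalently, if and only if B = A ∨ (B ⊙ (B_0 − id)), where A = diag(b_{11},…,b_{dd}) and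 ∨ is the entrywise maximum. -/
open scoped NNReal ENNReal Classical

namespace MaxLinearDAG

variable {d : ℕ}

/-!
Evaluating the model at the unit noise vectors `z = eⱼ` turns the recursion into
`b j i = max (max_{k ∈ pa(i)} c k i * b j k) (c i i * [i = j])`. Induction along the DAG then
gives the triangle inequality `b j k * b k i ≤ b j i * b k k`, which is `B = B ⊙ B₀`.
Conversely, if the triangle inequality holds, the graph `k → i` for `b k i > 0`, `k ≠ i`,
with edge weights `b k i / b k k` and node weights `b i i` reproduces `B`, and it is acyclic
because `sgn(B)` is the reachability matrix of a DAG. The second equivalence holds because,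
once `b i i ≠ 0`, both sides say `B ⊙ (B₀ - id) ≤ B` entrywise.
-/

section Graph

variable {R S : Fin d → Fin d → Prop}

theorem anc_iff_transGen {j i : Fin d} : anc R j i ↔ Relation.TransGen R j i := by
  rw [Relation.TransGen.head'_iff]
  constructor
  · rintro ⟨_ | ⟨a, _ | ⟨k, l⟩⟩, hlen, hhead, hlast, hchain⟩
    · simp at hlen
    · simp at hlen
    · obtain rfl : a = j := by simpa using hhead
      rw [List.Chain', List.isChain_cons_cons] at hchain
      refine ⟨k, hchain.1, List.relationReflTransGen_of_exists_isChain_cons l hchain.2 ?_⟩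
      simpa [List.getLast?_eq_some_getLast] using hlast
  · rintro ⟨k, hjk, hki⟩
    obtain ⟨l, hchain, hlast⟩ := List.exists_isChain_cons_of_relationReflTransGen hki
    refine ⟨j :: k :: l, by simp, rfl, ?_, hchain.cons_cons hjk⟩
    simpa [List.getLast?_eq_some_getLast] using hlast

theorem Acyclic.wellFounded (h : Acyclic R) : WellFounded R :=
  have : WellFounded (Relation.TransGen R) :=
    @Finite.wellFounded_of_trans_of_irrefl _ _ _ ⟨fun _ _ _ => Relation.TransGen.trans⟩
      ⟨fun i hi => h i (anc_iff_transGen.2 hi)⟩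
  Subrelation.wf Relation.TransGen.single this

theorem Acyclic.mono_anc (hS : Acyclic S) (h : ∀ k i, R k i → anc S k i) : Acyclic R := by
  intro i hi
  exact hS i <| anc_iff_transGen.2 <|
    Relation.TransGen.lift' id (fun k i hki => anc_iff_transGen.1 (h k i hki))
      _ _ (anc_iff_transGen.1 hi)

end Graph

section MaxTimes

theorem le_mprod (F G : Fin d → Fin d → ℝ≥0) (j k i : Fin d) :
    F j k * G k i ≤ mprod F G j i :=
  Finset.le_sup (f := fun k => F j k * G k i) (Finset.mem_univ k)

theorem mprod_le_iff {F G : Fin d → Fin d → ℝ≥0} {j i : Fin d} {x : ℝ≥0} :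
    mprod F G j i ≤ x ↔ ∀ k, F j k * G k i ≤ x := by
  simp [mprod]

/-- The matrix `B₀` of the paper. -/
noncomputable def diagNormalized (b : Fin d → Fin d → ℝ≥0) : Fin d → Fin d → ℝ≥0 :=
  fun i j => b i j / b i i

noncomputable def diagNormalizedSubOne (b : Fin d → Fin d → ℝ≥0) :
    Fin d → Fin d → ℝ≥0 :=
  fun k i => diagNormalized b k i - if k = i then 1 else 0

variable {b : Fin d → Fin d → ℝ≥0} (hb : ∀ i, b i i ≠ 0)
include hb

theorem diagNormalized_self (i : Fin d) : diagNormalized b i i = 1 :=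
  div_self (hb i)

theorem le_mprod_diagNormalized (j i : Fin d) :
    b j i ≤ mprod b (diagNormalized b) j i := by
  simpa [diagNormalized_self hb] using le_mprod b (diagNormalized b) j i i

theorem eq_mprod_diagNormalized_iff :
    (∀ j i, b j i = mprod b (diagNormalized b) j i) ↔
      ∀ j k i, b j k * diagNormalized b k i ≤ b j i := by
  simp only [le_antisymm_iff, le_mprod_diagNormalized hb, true_and, mprod_le_iff]
  exact ⟨fun h j k i => h j i k, fun h j i k => h j k i⟩

theorem mprod_diagNormalized_eq_sup (j i : Fin d) :
    mprod b (diagNormalized b) j i =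
      b j i ⊔ mprod b (diagNormalizedSubOne b) j i := by
  refine le_antisymm (mprod_le_iff.2 fun k => ?_)
    (sup_le (le_mprod_diagNormalized hb j i) (mprod_le_iff.2 fun k => ?_))
  · by_cases hk : k = i
    · subst hk
      simp [diagNormalized_self hb]
    · refine le_sup_of_le_right ?_
      simpa [diagNormalizedSubOne, hk] using le_mprod b (diagNormalizedSubOne b) j k i
  · exact (mul_le_mul_right tsub_le_self _).trans (le_mprod b _ j k i)

theorem le_mprod_diagNormalized_sub_one {j i : Fin d} (hji : j ≠ i) :
    b j i ≤ mprod b (diagNormalizedSubOne b) j i := by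
  simpa [diagNormalizedSubOne, hji, diagNormalized, mul_div_cancel₀ _ (hb j)]
    using le_mprod b (diagNormalizedSubOne b) j j i

theorem eq_mprod_diagNormalized_iff_eq_diag_sup :
    (∀ j i, b j i = mprod b (diagNormalized b) j i) ↔
      ∀ j i, b j i = (if j = i then b j j else 0) ⊔
        mprod b (diagNormalizedSubOne b) j i := by
  simp only [mprod_diagNormalized_eq_sup hb, left_eq_sup]
  refine forall₂_congr fun j i => ?_
  split_ifs with hji
  · subst hji
    exact left_eq_sup.symm
  · rw [max_eq_right zero_le]
    exact ⟨fun h => le_antisymm (le_mprod_diagNormalized_sub_one hb hji) h, fun h => h.ge⟩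

end MaxTimes

section RecML

variable {E : Fin d → Fin d → Prop} {c b : Fin d → Fin d → ℝ≥0}
  (hrec : ∀ z, IsRecML E c z fun i => Finset.univ.sup fun j => b j i * z j)
include hrec

theorem eq_sup_of_isRecML (j i : Fin d) :
    b j i = (Finset.univ.sup fun k => if E k i then c k i * b j k else 0) ⊔
      if i = j then c i i else 0 := by
  simpa [Finset.sup_ite, Finset.filter_eq'] using hrec (fun m => if m = j then 1 else 0) i

theorem mul_le_of_isRecML {j k i : Fin d} (hki : E k i) : c k i * b j k ≤ b j i := by
  rw [eq_sup_of_isRecML hrec j i]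
  refine le_sup_of_le_left (le_trans ?_ (Finset.le_sup (Finset.mem_univ k)))
  simp [hki]

theorem diag_le_of_isRecML (i : Fin d) : c i i ≤ b i i := by
  rw [eq_sup_of_isRecML hrec i i]
  simp

theorem mul_le_mul_diag_of_isRecML (hE : Acyclic E) (j k i : Fin d) :
    b j k * b k i ≤ b j i * b k k := by
  induction i using hE.wellFounded.induction generalizing j k with
  | _ i ih =>
    rw [eq_sup_of_isRecML hrec k i, mul_max, NNReal.mul_finset_sup]
    refine sup_le (Finset.sup_le fun m _ => ?_) ?_
    · split_ifs with hmi
      · calc b j k * (c m i * b k m) = c m i * (b j k * b k m) := by ring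
          _ ≤ c m i * (b j m * b k k) := mul_le_mul_right (ih m hmi j k) _
          _ = c m i * b j m * b k k := by ring
          _ ≤ b j i * b k k := mul_le_mul_left (mul_le_of_isRecML hrec hmi) _
      · simp
    · split_ifs with hik
      · subst hik
        exact mul_le_mul_right (diag_le_of_isRecML hrec i) _
      · simp

end RecML

section Construction

def supportGraph (b : Fin d → Fin d → ℝ≥0) : Fin d → Fin d → Prop :=
  fun k i => k ≠ i ∧ 0 < b k i

noncomputable def supportWeights (b : Fin d → Fin d → ℝ≥0) : Fin d → Fin d → ℝ≥0 :=
  fun k i => if k = i then b i i else diagNormalized b k i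

variable {b : Fin d → Fin d → ℝ≥0}

theorem acyclic_supportGraph {E : Fin d → Fin d → Prop} (hE : Acyclic E)
    (hb : ∀ j i, j ≠ i → 0 < b j i → anc E j i) : Acyclic (supportGraph b) :=
  hE.mono_anc fun k i hki => hb k i hki.1 hki.2

theorem isRecML_supportGraph (hb : ∀ i, b i i ≠ 0)
    (htri : ∀ j k i, b j k * diagNormalized b k i ≤ b j i) (z : Fin d → ℝ≥0) :
    IsRecML (supportGraph b) (supportWeights b) z
      fun i => Finset.univ.sup fun j => b j i * z j := by
  intro i
  apply le_antisymm
  · refine Finset.sup_le fun j _ => ?_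
    by_cases hji : j = i
    · subst hji
      exact le_sup_of_le_right (by simp [supportWeights])
    rcases eq_zero_or_pos (b j i) with hzero | hpos
    · simp [hzero]
    refine le_sup_of_le_left (le_trans ?_ (Finset.le_sup (Finset.mem_univ j)))
    simp only [supportGraph, supportWeights, if_pos (And.intro hji hpos), if_neg hji]
    calc b j i * z j = diagNormalized b j i * (b j j * z j) := by
          rw [diagNormalized, ← mul_assoc, div_mul_cancel₀ _ (hb j)]
      _ ≤ _ := mul_le_mul_right
          (Finset.le_sup (f := fun m => b m j * z m) (Finset.mem_univ j)) _
  · refine sup_le (Finset.sup_le fun k _ => ?_) ?_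
    · split_ifs with hki
      · rw [supportWeights, if_neg hki.1, NNReal.mul_finset_sup]
        refine Finset.sup_le fun m _ => ?_
        calc diagNormalized b k i * (b m k * z m) = b m k * diagNormalized b k i * z m := by
              ring
          _ ≤ b m i * z m := mul_le_mul_left (htri m k i) _
          _ ≤ _ := Finset.le_sup (f := fun j => b j i * z j) (Finset.mem_univ m)
      · exact zero_le
    · simpa [supportWeights] using
        Finset.le_sup (f := fun j => b j i * z j) (Finset.mem_univ i)

end Construction

theorem stmt14_general {d : ℕ} (b : Fin d → Fin d → ℝ≥0)
    (E : Fin d → Fin d → Prop) (hE : Acyclic E)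
    (hsgn : ∀ j i, 0 < b j i ↔ (anc E j i ∨ j = i)) :
    let B0 : Fin d → Fin d → ℝ≥0 := fun i j => b i j / b i i
    let A : Fin d → Fin d → ℝ≥0 := fun i j => if i = j then b i i else 0
    let idm : Fin d → Fin d → ℝ≥0 := fun i j => if i = j then 1 else 0
    ((∃ (E' : Fin d → Fin d → Prop) (c' : Fin d → Fin d → ℝ≥0), Acyclic E' ∧
        (∀ k i, E' k i → 0 < c' k i) ∧ (∀ i, 0 < c' i i) ∧
        ∀ z : Fin d → ℝ≥0,
          IsRecML E' c' z fun i => Finset.univ.sup fun j => b j i * z j) ↔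
      ∀ j i, b j i = mprod b B0 j i) ∧
    ((∀ j i, b j i = mprod b B0 j i) ↔
      ∀ j i, b j i = A j i ⊔ mprod b (fun a a' => B0 a a' - idm a a') j i) := by
  intro B0 A idm
  have hdiag : ∀ i, 0 < b i i := fun i => (hsgn i i).2 (Or.inr rfl)
  have hb : ∀ i, b i i ≠ 0 := fun i => (hdiag i).ne'
  refine ⟨⟨?_, fun hB => ?_⟩, eq_mprod_diagNormalized_iff_eq_diag_sup hb⟩
  · rintro ⟨E', c', hE', -, -, hrec⟩
    refine (eq_mprod_diagNormalized_iff hb).2 fun j k i => ?_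
    rw [diagNormalized, ← mul_div_assoc, div_le_iff₀ (hdiag k)]
    exact mul_le_mul_diag_of_isRecML hrec hE' j k i
  · refine ⟨supportGraph b, supportWeights b,
      acyclic_supportGraph hE fun j i hji hpos => ((hsgn j i).1 hpos).resolve_right hji,
      fun k i hki => ?_, fun i => by simpa [supportWeights] using hdiag i,
      isRecML_supportGraph hb ((eq_mprod_diagNormalized_iff hb).1 hB)⟩
    simpa [supportWeights, hki.1, diagNormalized] using div_pos hki.2 (hdiag k)

/-- Let `B` be a nonnegative matrix such that `sgn(B)` is the reachability
matrix of some DAG (witnessed by `E`), and set `B0 = (b i j / b i i)`. Then there exist a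
DAG `𝒟'` and positive weights `c'` whose recursive max-linear values equal
`max_j b j i * z j` for every `z`, iff `B = B ⊙ B0`; equivalently, iff
`B = A ∨ (B ⊙ (B0 − id))` with `A = diag(b 1 1, …, b d d)`. -/
theorem stmt14 {d : ℕ} (hd : 1 ≤ d) (b : Fin d → Fin d → ℝ≥0)
    (E : Fin d → Fin d → Prop) (hE : Acyclic E)
    (hsgn : ∀ j i, 0 < b j i ↔ (anc E j i ∨ j = i)) :
    let B0 : Fin d → Fin d → ℝ≥0 := fun i j => b i j / b i i
    let A : Fin d → Fin d → ℝ≥0 := fun i j => if i = j then b i i else 0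
    let idm : Fin d → Fin d → ℝ≥0 := fun i j => if i = j then 1 else 0
    ((∃ (E' : Fin d → Fin d → Prop) (c' : Fin d → Fin d → ℝ≥0), Acyclic E' ∧
        (∀ k i, E' k i → 0 < c' k i) ∧ (∀ i, 0 < c' i i) ∧
        ∀ z : Fin d → ℝ≥0,
          IsRecML E' c' z fun i => Finset.univ.sup fun j => b j i * z j) ↔
      ∀ j i, b j i = mprod b B0 j i) ∧
    ((∀ j i, b j i = mprod b B0 j i) ↔
      ∀ j i, b j i = A j i ⊔ mprod b (fun a a' => B0 a a' - idm a a') j i) :=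
  stmt14_general b E hE hsgn
end MaxLinearDAG
end

section
/- Let U ⊆ V. (a) For nodes j and i, 𝒟 has a max-weighted path from j to i passing through some node in U if and only if it has a max-weighted path from j to i passing through some node in An_low^U(i). (b) For nodes i and l, 𝒟 has a max-weighted path from i to l passing through some node in U if and only if it has a max-weighted path from i to l passing through some node in De_high^U(i). -/
open scoped NNReal ENNReal Classical

namespace MaxLinearDAG

variable {d : ℕ}

section Aux

variable {d : ℕ} {E : Fin d → Fin d → Prop} {c b : Fin d → Fin d → ℝ≥0}

/-- A walk: like `PathFrom` but allowing the trivial single-node list. -/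
def Walk (E : Fin d → Fin d → Prop) (j i : Fin d) (p : List (Fin d)) : Prop :=
  p ≠ [] ∧ p.head? = some j ∧ p.getLast? = some i ∧ List.Chain' E p

lemma PathFrom.walk {j i : Fin d} {p : List (Fin d)} (h : PathFrom E j i p) : Walk E j i p :=
  ⟨List.ne_nil_of_length_pos (by have := h.1; omega), h.2⟩

lemma Walk.pathFrom {j i : Fin d} {p : List (Fin d)} (h : Walk E j i p)
    (hl : 2 ≤ p.length) : PathFrom E j i p := ⟨hl, h.2⟩

noncomputable def prodEdges (c : Fin d → Fin d → ℝ≥0) (p : List (Fin d)) : ℝ≥0 :=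
  ((p.zip p.tail).map fun q => c q.1 q.2).prod

lemma pathWeight_eq (j : Fin d) (p : List (Fin d)) :
    pathWeight c j p = c j j * prodEdges c p := rfl

lemma prodEdges_singleton (a : Fin d) : prodEdges c [a] = 1 := by simp [prodEdges]

lemma prodEdges_cons_cons (a e : Fin d) (l : List (Fin d)) :
    prodEdges c (a :: e :: l) = c a e * prodEdges c (e :: l) := by simp [prodEdges]

lemma prodEdges_append (c : Fin d → Fin d → ℝ≥0) :
    ∀ (p q : List (Fin d)) (u : Fin d), p.getLast? = some u → q.head? = some u →
      prodEdges c (p ++ q.tail) = prodEdges c p * prodEdges c q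
  | [], q, u, hp, _ => by simp at hp
  | [a], q, u, hp, hq => by
      simp at hp; subst hp
      cases q with
      | nil => simp at hq
      | cons x q' =>
        simp at hq; subst hq
        simp [prodEdges_singleton]
  | a :: e :: p', q, u, hp, hq => by
      have ih := prodEdges_append c (e :: p') q u (by simpa using hp) hq
      have h1 : (a :: e :: p') ++ q.tail = a :: e :: (p' ++ q.tail) := by simp
      have h2 : (e :: p') ++ q.tail = e :: (p' ++ q.tail) := by simp
      rw [h1, prodEdges_cons_cons, ← h2, ih, prodEdges_cons_cons, mul_assoc]

lemma walk_append {j u i : Fin d} {p q : List (Fin d)}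
    (hp : Walk E j u p) (hq : Walk E u i q) : Walk E j i (p ++ q.tail) := by
  obtain ⟨hne, hh, hl, hc⟩ := hp
  obtain ⟨hne', hh', hl', hc'⟩ := hq
  cases q with
  | nil => exact absurd rfl hne'
  | cons x q' =>
    have hx : x = u := by simpa using hh'
    rw [← hx] at hl
    refine ⟨by simp [hne], ?_, ?_, ?_⟩
    · rw [List.head?_append, hh]; rfl
    · cases q' with
      | nil =>
        have hxi : x = i := by simpa using hl'
        simpa [hxi] using hl
      | cons y q'' =>
        rw [List.tail_cons, List.getLast?_append_of_ne_nil _ (List.cons_ne_nil _ _)]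
        simpa using hl'
    · rw [List.tail_cons]
      refine List.isChain_append.mpr ⟨hc, (List.isChain_cons.mp hc').2, ?_⟩
      intro a ha y hy
      have hax : a = x := by rw [hl] at ha; simpa using ha.symm
      subst hax
      exact (List.isChain_cons.mp hc').1 y hy

lemma walk_weight_append {j u i : Fin d} {p q : List (Fin d)}
    (hp : Walk E j u p) (hq : Walk E u i q) :
    pathWeight c j (p ++ q.tail) * c u u = pathWeight c j p * pathWeight c u q := by
  rw [pathWeight_eq, pathWeight_eq, pathWeight_eq,
    prodEdges_append c p q u hp.2.2.1 hq.2.1]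
  ring

lemma anc_trans_s16 {a e f : Fin d} (h1 : anc E a e) (h2 : anc E e f) : anc E a f := by
  obtain ⟨p, hp⟩ := h1
  obtain ⟨q, hq⟩ := h2
  refine ⟨p ++ q.tail, (walk_append hp.walk hq.walk).pathFrom ?_⟩
  have := hp.1
  simp only [List.length_append]
  omega

lemma not_anc_self (hE : Acyclic E) (u : Fin d) : ¬ anc E u u := hE u

lemma walk_weight_le (hb : IsMLMatrix E c b) {u i : Fin d} {S : List (Fin d)}
    (h : Walk E u i S) : pathWeight c u S ≤ b u i := by
  rcases Nat.lt_or_ge S.length 2 with hl | hl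
  · obtain ⟨hne, hh, hla, _⟩ := h
    have hlen : S.length = 1 := by
      have := List.length_pos_iff.mpr hne; omega
    obtain ⟨x, hx⟩ := List.length_eq_one_iff.mp hlen
    subst hx
    have hxu : x = u := by simpa using hh
    have hui : x = i := by simpa using hla
    subst hxu; subst hui
    rw [pathWeight_eq, prodEdges_singleton, mul_one, hb.1]
  · exact hb.2.2.1 u i S (h.pathFrom hl)

lemma split_walks {j i u : Fin d} {s t : List (Fin d)}
    (h : PathFrom E j i (s ++ u :: t)) :
    Walk E j u (s ++ [u]) ∧ Walk E u i (u :: t) := by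
  obtain ⟨hl, hh, hla, hc⟩ := h
  constructor
  · refine ⟨by simp, ?_, by simp, ?_⟩
    · cases s with
      | nil => simpa using hh
      | cons a s' => rw [List.head?_append]; rw [List.head?_append] at hh; simpa using hh
    · have he : s ++ u :: t = (s ++ [u]) ++ t := by simp
      rw [he] at hc
      exact hc.prefix ⟨t, rfl⟩
  · refine ⟨List.cons_ne_nil _ _, rfl, ?_, hc.suffix ⟨s, rfl⟩⟩
    rw [← hla, List.getLast?_append_of_ne_nil _ (List.cons_ne_nil _ _)]

end Aux

section Aux2

variable {d : ℕ} {E : Fin d → Fin d → Prop} {c b : Fin d → Fin d → ℝ≥0}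

lemma split_weight {j i u : Fin d} {s t : List (Fin d)}
    (h : PathFrom E j i (s ++ u :: t)) :
    pathWeight c j (s ++ u :: t) * c u u
      = pathWeight c j (s ++ [u]) * pathWeight c u (u :: t) := by
  obtain ⟨hw1, hw2⟩ := split_walks h
  have := walk_weight_append (c := c) hw1 hw2
  simpa using this

lemma replace_suffix (hb : IsMLMatrix E c b) {j i u : Fin d} {s t q : List (Fin d)}
    (hcu : c u u ≠ 0)
    (hp : MaxWeighted E c b j i (s ++ u :: t)) (hq : MaxWeighted E c b u i q) :
    MaxWeighted E c b j i ((s ++ [u]) ++ q.tail) ∧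
      ∀ x ∈ q, x ∈ (s ++ [u]) ++ q.tail := by
  obtain ⟨hw1, hw2⟩ := split_walks hp.1
  have hqw : Walk E u i q := hq.1.walk
  have hr : Walk E j i ((s ++ [u]) ++ q.tail) := walk_append hw1 hqw
  have hql : 2 ≤ q.length := hq.1.1
  have hrl : 2 ≤ ((s ++ [u]) ++ q.tail).length := by
    simp only [List.length_append, List.length_cons, List.length_tail]
    omega
  have hrp : PathFrom E j i ((s ++ [u]) ++ q.tail) := hr.pathFrom hrl
  have e1 : pathWeight c j ((s ++ [u]) ++ q.tail) * c u u
      = pathWeight c j (s ++ [u]) * pathWeight c u q := walk_weight_append hw1 hqw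
  have e2 := split_weight (c := c) hp.1
  have hge : b j i * c u u ≤ pathWeight c j ((s ++ [u]) ++ q.tail) * c u u := by
    rw [e1, hq.2]
    calc b j i * c u u = pathWeight c j (s ++ u :: t) * c u u := by rw [hp.2]
      _ = pathWeight c j (s ++ [u]) * pathWeight c u (u :: t) := e2
      _ ≤ pathWeight c j (s ++ [u]) * b u i :=
          mul_le_mul_right (walk_weight_le hb hw2) _
  have hle : pathWeight c j ((s ++ [u]) ++ q.tail) ≤ b j i := hb.2.2.1 _ _ _ hrp
  have heq : pathWeight c j ((s ++ [u]) ++ q.tail) * c u u = b j i * c u u :=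
    le_antisymm (mul_le_mul_left hle _) hge
  have hwr : pathWeight c j ((s ++ [u]) ++ q.tail) = b j i := mul_right_cancel₀ hcu heq
  refine ⟨⟨hrp, hwr⟩, ?_⟩
  intro x hx
  cases q with
  | nil => simp at hx
  | cons y q' =>
    have hy : y = u := by simpa using hq.1.2.1
    subst hy
    rcases List.mem_cons.mp hx with rfl | hx'
    · simp
    · simp [hx']

lemma replace_prefix (hb : IsMLMatrix E c b) {i l u : Fin d} {s t q : List (Fin d)}
    (hcu : c u u ≠ 0)
    (hp : MaxWeighted E c b i l (s ++ u :: t)) (hq : MaxWeighted E c b i u q) :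
    MaxWeighted E c b i l (q ++ t) ∧ ∀ x ∈ q, x ∈ q ++ t := by
  obtain ⟨hw1, hw2⟩ := split_walks hp.1
  have hqw : Walk E i u q := hq.1.walk
  have hr : Walk E i l (q ++ t) := by
    have := walk_append hqw hw2
    simpa using this
  have hql : 2 ≤ q.length := hq.1.1
  have hrl : 2 ≤ (q ++ t).length := by
    simp only [List.length_append]; omega
  have hrp : PathFrom E i l (q ++ t) := hr.pathFrom hrl
  have e1 : pathWeight c i (q ++ t) * c u u
      = pathWeight c i q * pathWeight c u (u :: t) := by
    have := walk_weight_append (c := c) hqw hw2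
    simpa using this
  have e2 := split_weight (c := c) hp.1
  have hge : b i l * c u u ≤ pathWeight c i (q ++ t) * c u u := by
    rw [e1, hq.2]
    calc b i l * c u u = pathWeight c i (s ++ u :: t) * c u u := by rw [hp.2]
      _ = pathWeight c i (s ++ [u]) * pathWeight c u (u :: t) := e2
      _ ≤ b i u * pathWeight c u (u :: t) :=
          mul_le_mul_left (walk_weight_le hb hw1) _
  have hle : pathWeight c i (q ++ t) ≤ b i l := hb.2.2.1 _ _ _ hrp
  have heq : pathWeight c i (q ++ t) * c u u = b i l * c u u :=
    le_antisymm (mul_le_mul_left hle _) hge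
  exact ⟨⟨hrp, mul_right_cancel₀ hcu heq⟩, fun x hx => List.mem_append_left _ hx⟩

end Aux2

section Main

variable {d : ℕ} {E : Fin d → Fin d → Prop} {c b : Fin d → Fin d → ℝ≥0}

lemma keyA (hE : Acyclic E) (hcd : ∀ i, 0 < c i i) (hb : IsMLMatrix E c b)
    (U : Set (Fin d)) (j i : Fin d) :
    ∀ (n : ℕ) (p : List (Fin d)) (u : Fin d),
      (Finset.univ.filter fun v => anc E u v).card < n →
      MaxWeighted E c b j i p → u ∈ U → u ∈ p →
      ∃ r, MaxWeighted E c b j i r ∧ ∃ w ∈ AnLow E c b U i, w ∈ r := by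
  intro n
  induction n with
  | zero => intro p u h; exact absurd h (Nat.not_lt_zero _)
  | succ n ih =>
    intro p u hcard hmw hU hup
    by_cases hA : u ∈ AnLow E c b U i
    · exact ⟨p, hmw, u, hA, hup⟩
    obtain ⟨s, t, rfl⟩ := List.append_of_mem hup
    obtain ⟨hw1, hw2⟩ := split_walks hmw.1
    have hfirst : anc E u i ∨ u = i := by
      cases t with
      | nil => right; simpa using hw2.2.2.1
      | cons y t' => left; exact ⟨u :: y :: t', hw2.pathFrom (by simp)⟩
    have hnotall : ∃ q, MaxWeighted E c b u i q ∧ ∃ u' ∈ U \ {u}, u' ∈ q := by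
      by_contra hcon
      push_neg at hcon
      exact hA ⟨hfirst, hU, fun q hq => by push_neg; exact hcon q hq⟩
    obtain ⟨q, hq, u', hu'U, hu'q⟩ := hnotall
    obtain ⟨hrmw, hsub⟩ := replace_suffix hb (hcd u).ne' hmw hq
    have hne : u' ≠ u := by have := hu'U.2; simpa using this
    obtain ⟨s', t', hq'⟩ := List.append_of_mem hu'q
    have hs' : s' ≠ [] := by
      rintro rfl
      apply hne
      have h0 := hq.1.2.1
      rw [hq'] at h0
      simpa using h0
    have hanc : anc E u u' := by
      rw [hq'] at hq
      obtain ⟨hw1', _⟩ := split_walks hq.1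
      refine ⟨s' ++ [u'], hw1'.pathFrom ?_⟩
      cases s' with
      | nil => exact absurd rfl hs'
      | cons a s'' => simp
    have hlt : (Finset.univ.filter fun v => anc E u' v).card
        < (Finset.univ.filter fun v => anc E u v).card := by
      apply Finset.card_lt_card
      rw [Finset.ssubset_def]
      constructor
      · intro v hv
        simp only [Finset.mem_filter, Finset.mem_univ, true_and] at hv ⊢
        exact anc_trans_s16 hanc hv
      · intro hsup
        have h1 : u' ∈ Finset.univ.filter fun v => anc E u v := by simp [hanc]
        have h2 := hsup h1
        simp only [Finset.mem_filter, Finset.mem_univ, true_and] at h2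
        exact not_anc_self hE u' h2
    exact ih _ u' (by omega) hrmw hu'U.1 (hsub u' hu'q)

lemma keyB (hE : Acyclic E) (hcd : ∀ i, 0 < c i i) (hb : IsMLMatrix E c b)
    (U : Set (Fin d)) (i l : Fin d) :
    ∀ (n : ℕ) (p : List (Fin d)) (u : Fin d),
      (Finset.univ.filter fun v => anc E v u).card < n →
      MaxWeighted E c b i l p → u ∈ U → u ∈ p →
      ∃ r, MaxWeighted E c b i l r ∧ ∃ w ∈ DeHigh E c b U i, w ∈ r := by
  intro n
  induction n with
  | zero => intro p u h; exact absurd h (Nat.not_lt_zero _)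
  | succ n ih =>
    intro p u hcard hmw hU hup
    by_cases hA : u ∈ DeHigh E c b U i
    · exact ⟨p, hmw, u, hA, hup⟩
    obtain ⟨s, t, rfl⟩ := List.append_of_mem hup
    obtain ⟨hw1, hw2⟩ := split_walks hmw.1
    have hfirst : anc E i u ∨ u = i := by
      cases s with
      | nil => right; simpa using hw1.2.1
      | cons a s' => left; exact ⟨(a :: s') ++ [u], hw1.pathFrom (by simp)⟩
    have hnotall : ∃ q, MaxWeighted E c b i u q ∧ ∃ u' ∈ U \ {u}, u' ∈ q := by
      by_contra hcon
      push_neg at hcon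
      exact hA ⟨hfirst, hU, fun q hq => by push_neg; exact hcon q hq⟩
    obtain ⟨q, hq, u', hu'U, hu'q⟩ := hnotall
    obtain ⟨hrmw, hsub⟩ := replace_prefix hb (hcd u).ne' hmw hq
    have hne : u' ≠ u := by have := hu'U.2; simpa using this
    obtain ⟨s', t', hq'⟩ := List.append_of_mem hu'q
    have ht' : t' ≠ [] := by
      rintro rfl
      apply hne
      have h0 := hq.1.2.2.1
      rw [hq'] at h0
      rw [List.getLast?_append_of_ne_nil _ (List.cons_ne_nil _ _)] at h0
      simpa using h0
    have hanc : anc E u' u := by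
      rw [hq'] at hq
      obtain ⟨_, hw2'⟩ := split_walks hq.1
      refine ⟨u' :: t', hw2'.pathFrom ?_⟩
      cases t' with
      | nil => exact absurd rfl ht'
      | cons a t'' => simp
    have hlt : (Finset.univ.filter fun v => anc E v u').card
        < (Finset.univ.filter fun v => anc E v u).card := by
      apply Finset.card_lt_card
      rw [Finset.ssubset_def]
      constructor
      · intro v hv
        simp only [Finset.mem_filter, Finset.mem_univ, true_and] at hv ⊢
        exact anc_trans_s16 hv hanc
      · intro hsup
        have h1 : u' ∈ Finset.univ.filter fun v => anc E v u := by simp [hanc]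
        have h2 := hsup h1
        simp only [Finset.mem_filter, Finset.mem_univ, true_and] at h2
        exact not_anc_self hE u' h2
    exact ih _ u' (by omega) hrmw hu'U.1 (hsub u' hu'q)

end Main

/-- Let `U ⊆ V`.
(a) `𝒟` has a max-weighted path from `j` to `i` passing through some node in `U` iff it has
a max-weighted path from `j` to `i` passing through some node in `An_low^U(i)`.
(b) `𝒟` has a max-weighted path from `i` to `l` passing through some node in `U` iff it has
a max-weighted path from `i` to `l` passing through some node in `De_high^U(i)`. -/
theorem stmt16 {d : ℕ} (hd : 1 ≤ d) (E : Fin d → Fin d → Prop) (hE : Acyclic E)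
    (c : Fin d → Fin d → ℝ≥0) (hcd : ∀ i, 0 < c i i) (hce : ∀ k i, E k i → 0 < c k i)
    (b : Fin d → Fin d → ℝ≥0) (hb : IsMLMatrix E c b)
    (U : Set (Fin d)) :
    (∀ j i, ((∃ p, MaxWeighted E c b j i p ∧ ∃ u ∈ U, u ∈ p) ↔
      ∃ p, MaxWeighted E c b j i p ∧ ∃ u ∈ AnLow E c b U i, u ∈ p)) ∧
    (∀ i l, ((∃ p, MaxWeighted E c b i l p ∧ ∃ u ∈ U, u ∈ p) ↔
      ∃ p, MaxWeighted E c b i l p ∧ ∃ u ∈ DeHigh E c b U i, u ∈ p)) := by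
  constructor
  · intro j i
    constructor
    · rintro ⟨p, hp, u, hU, hup⟩
      exact keyA hE hcd hb U j i _ p u (Nat.lt_succ_self _) hp hU hup
    · rintro ⟨p, hp, u, hu, hup⟩
      exact ⟨p, hp, u, hu.2.1, hup⟩
  · intro i l
    constructor
    · rintro ⟨p, hp, u, hU, hup⟩
      exact keyB hE hcd hb U i l _ p u (Nat.lt_succ_self _) hp hU hup
    · rintro ⟨p, hp, u, hu, hup⟩
      exact ⟨p, hp, u, hu.2.1, hup⟩
end MaxLinearDAG
end
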